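/- arXiv:1701.06292 — 3 statements merged into one kernel-verified Lean document; each statement's English description precedes it below -/
import Mathlib

section
/- The $q$-Gauss summation identity: for complex numbers $q, s, x, y$ with $|q| < 1$, $|s^2| < 1$, and $|xy| < 1$, one has $\sum_{i=0}^{\infty} \frac{(-s/x;q)_i (-s/y;q)_i}{(s^2;q)_i (q;q)_i} (xy)^i = \frac{(-sx;q)_\infty (-sy;q)_\infty}{(s^2;q)_\infty (xy;q)_\infty}$. -/
/-- The finite q-Pochhammer symbol `(a;q)_m = ∏_{i<m} (1 - a q^i)`. -/
noncomputable def qPoch (q a : ℂ) (m : ℕ) : ℂ := ∏ i ∈ Finset.range m, (1 - a * q ^ i)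

/-!
Write `F(x, y)` for the left-hand side. Its terms are products of ratios tending to `x y`, so the
series converges, and dominated convergence against the same series with parameters
`‖q‖, ‖s‖, ‖x‖, ‖y‖` makes `F(x, ·)` continuous along `q ^ N y → 0`. The terms satisfy a
telescoping identity giving `(1 - x y) F(x, y) = (1 + s y) F(x, q y)`; iterating and letting
`N → ∞` yields `F(x, y) (xy; q)_∞ = (-sy; q)_∞ F(x, 0)`. Since `F` is symmetric,
`F(x, 0) = (-sx; q)_∞ F(0, 0)`, and `F(0, -s) = 1` (all terms but the first vanish) gives
`(s²; q)_∞ F(0, 0) = 1`.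
-/

open Filter Finset Topology

section NormedField

variable {𝕜 : Type*} [NormedField 𝕜]

lemma one_sub_mul_pow_ne_zero {a q : 𝕜} (ha : ‖a‖ < 1) (hq : ‖q‖ ≤ 1) (k : ℕ) :
    1 - a * q ^ k ≠ 0 := by
  have hlt : ‖a * q ^ k‖ < 1 := by
    rw [norm_mul, norm_pow]
    exact (mul_le_of_le_one_right (norm_nonneg a) (pow_le_one₀ (norm_nonneg q) hq)).trans_lt ha
  intro h
  rw [← sub_eq_zero.mp h, norm_one] at hlt
  exact hlt.false

lemma summable_prod_range_of_tendsto [CompleteSpace 𝕜] {g : ℕ → 𝕜} {l : 𝕜}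
    (hg : Tendsto g atTop (𝓝 l)) (hl : ‖l‖ < 1) :
    Summable fun n => ∏ k ∈ range n, g k := by
  obtain ⟨r, hlr, hr⟩ := exists_between hl
  refine summable_of_ratio_norm_eventually_le hr ?_
  filter_upwards [hg.norm.eventually_le_const hlr] with n hn
  rw [prod_range_succ, norm_mul, mul_comm]
  exact mul_le_mul_of_nonneg_right hn (norm_nonneg _)

lemma summable_norm_mul_pow (a : 𝕜) {q : 𝕜} (hq : ‖q‖ < 1) :
    Summable fun k : ℕ => ‖a * q ^ k‖ := by
  simpa [norm_mul, norm_pow] using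
    (summable_geometric_of_lt_one (norm_nonneg q) hq).mul_left ‖a‖

lemma multipliable_one_sub_mul_pow [CompleteSpace 𝕜] (a : 𝕜) {q : 𝕜} (hq : ‖q‖ < 1) :
    Multipliable fun k : ℕ => 1 - a * q ^ k := by
  simpa [sub_eq_add_neg] using
    multipliable_one_add_of_summable (f := fun k : ℕ => -(a * q ^ k))
      (by simpa using summable_norm_mul_pow a hq)

lemma tprod_one_sub_mul_pow_ne_zero [CompleteSpace 𝕜] {a q : 𝕜} (ha : ‖a‖ < 1) (hq : ‖q‖ < 1) :
    ∏' k : ℕ, (1 - a * q ^ k) ≠ 0 := by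
  simpa [sub_eq_add_neg] using
    tprod_one_add_ne_zero_of_summable (f := fun k : ℕ => -(a * q ^ k))
      (by simpa [sub_eq_add_neg] using one_sub_mul_pow_ne_zero ha hq.le)
      (by simpa using summable_norm_mul_pow a hq)

def qGaussRatio (q s x y : 𝕜) (k : ℕ) : 𝕜 :=
  (x + s * q ^ k) * (y + s * q ^ k) / ((1 - s ^ 2 * q ^ k) * (1 - q * q ^ k))

lemma tendsto_qGaussRatio {q : 𝕜} (hq : ‖q‖ < 1) (s x y : 𝕜) :
    Tendsto (qGaussRatio q s x y) atTop (𝓝 (x * y)) := by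
  have hψ : ContinuousAt
      (fun t => (x + s * t) * (y + s * t) / ((1 - s ^ 2 * t) * (1 - q * t))) 0 := by
    fun_prop (disch := simp)
  have h : Tendsto (qGaussRatio q s x y) atTop (𝓝 _) :=
    hψ.tendsto.comp (tendsto_pow_atTop_nhds_zero_of_norm_lt_one hq)
  simpa using h

lemma norm_qGaussRatio_le {q s x y w : 𝕜} (hq : ‖q‖ < 1) (hs : ‖s ^ 2‖ < 1) (hw : ‖w‖ ≤ ‖y‖)
    (k : ℕ) : ‖qGaussRatio q s x w k‖ ≤ qGaussRatio ‖q‖ ‖s‖ ‖x‖ ‖y‖ k := by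
  have hnum (z : 𝕜) : ‖z + s * q ^ k‖ ≤ ‖z‖ + ‖s‖ * ‖q‖ ^ k := by
    simpa [norm_mul, norm_pow] using norm_add_le z (s * q ^ k)
  have hden (a : 𝕜) (ha : ‖a‖ < 1) :
      0 < 1 - ‖a‖ * ‖q‖ ^ k ∧ 1 - ‖a‖ * ‖q‖ ^ k ≤ ‖1 - a * q ^ k‖ := by
    have hle : ‖a‖ * ‖q‖ ^ k < 1 :=
      (mul_le_of_le_one_right (norm_nonneg a) (pow_le_one₀ (norm_nonneg q) hq.le)).trans_lt ha
    refine ⟨sub_pos.mpr hle, ?_⟩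
    simpa [norm_mul, norm_pow] using norm_sub_norm_le (1 : 𝕜) (a * q ^ k)
  obtain ⟨hs0, hs1⟩ := hden (s ^ 2) hs
  obtain ⟨hq0, hq1⟩ := hden q hq
  rw [qGaussRatio, qGaussRatio, norm_div, norm_mul, norm_mul, ← norm_pow s 2]
  gcongr
  · exact hnum x
  · exact (hnum w).trans (by gcongr)

end NormedField

noncomputable section

-- `homQPoch q s x n = x ^ n (-s/x; q)_n`
def homQPoch (q s x : ℂ) (n : ℕ) : ℂ := ∏ k ∈ range n, (x + s * q ^ k)

def qGaussTerm (q s x y : ℂ) (n : ℕ) : ℂ :=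
  homQPoch q s x n * homQPoch q s y n / (qPoch q (s ^ 2) n * qPoch q q n)

def qGaussSum (q s x y : ℂ) : ℂ := ∑' n, qGaussTerm q s x y n

end

variable {q s : ℂ}

lemma qGaussTerm_eq_prod (q s x y : ℂ) (n : ℕ) :
    qGaussTerm q s x y n = ∏ k ∈ range n, qGaussRatio q s x y k := by
  simp only [qGaussTerm, homQPoch, qPoch, qGaussRatio, prod_div_distrib, prod_mul_distrib]

lemma qGaussTerm_zero (q s x y : ℂ) : qGaussTerm q s x y 0 = 1 := by
  simp [qGaussTerm_eq_prod]

lemma qGaussTerm_succ (q s x y : ℂ) (n : ℕ) :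
    qGaussTerm q s x y (n + 1) = qGaussTerm q s x y n * qGaussRatio q s x y n := by
  simp only [qGaussTerm_eq_prod, prod_range_succ]

lemma qGaussTerm_comm (q s x y : ℂ) (n : ℕ) : qGaussTerm q s x y n = qGaussTerm q s y x n := by
  rw [qGaussTerm, qGaussTerm, mul_comm (homQPoch q s x n)]

lemma homQPoch_mul_left_succ (q s y : ℂ) (n : ℕ) :
    homQPoch q s (q * y) (n + 1) = (q * y + s) * q ^ n * homQPoch q s y n := by
  have hshift (k : ℕ) : q * y + s * q ^ (k + 1) = q * (y + s * q ^ k) := by ring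
  simp only [homQPoch, prod_range_succ', hshift, prod_mul_distrib, prod_const, card_range]
  ring

lemma qGaussTerm_mul_left_succ (q s x y : ℂ) (n : ℕ) :
    qGaussTerm q s x (q * y) (n + 1) = qGaussTerm q s x y n *
      ((q * y + s) * q ^ n * (x + s * q ^ n) / ((1 - s ^ 2 * q ^ n) * (1 - q * q ^ n))) := by
  rw [qGaussTerm, qGaussTerm, homQPoch_mul_left_succ, homQPoch, qPoch, qPoch, prod_range_succ,
    prod_range_succ, prod_range_succ, ← homQPoch, ← qPoch, ← qPoch, div_mul_div_comm]
  congr 1 <;> ring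

lemma summable_qGaussTerm {q : ℂ} (hq : ‖q‖ < 1) (s : ℂ) {x y : ℂ} (hxy : ‖x * y‖ < 1) :
    Summable (qGaussTerm q s x y) := by
  simp only [funext (qGaussTerm_eq_prod q s x y)]
  exact summable_prod_range_of_tendsto (tendsto_qGaussRatio hq s x y) hxy

lemma tendsto_qGaussSum_pow_mul (hq : ‖q‖ < 1) (hs : ‖s ^ 2‖ < 1) {x y : ℂ} (hxy : ‖x * y‖ < 1) :
    Tendsto (fun N : ℕ => qGaussSum q s x (q ^ N * y)) atTop (𝓝 (qGaussSum q s x 0)) := by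
  have hmajor : Summable fun n => ∏ k ∈ range n, qGaussRatio ‖q‖ ‖s‖ ‖x‖ ‖y‖ k :=
    summable_prod_range_of_tendsto (tendsto_qGaussRatio (by simpa using hq) _ _ _)
      (by simpa using hxy)
  refine tendsto_tsum_of_dominated_convergence hmajor (fun n => ?_) (Eventually.of_forall ?_)
  · have hcont : Continuous fun w => qGaussTerm q s x w n := by
      simp only [qGaussTerm, homQPoch]
      fun_prop
    have horbit : Tendsto (fun N : ℕ => q ^ N * y) atTop (𝓝 0) := by
      simpa using (tendsto_pow_atTop_nhds_zero_of_norm_lt_one hq).mul_const y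
    exact (hcont.tendsto 0).comp horbit
  · intro N n
    have hw : ‖q ^ N * y‖ ≤ ‖y‖ := by
      rw [norm_mul, norm_pow]
      exact mul_le_of_le_one_left (norm_nonneg y) (pow_le_one₀ (norm_nonneg q) hq.le)
    rw [qGaussTerm_eq_prod, norm_prod]
    exact prod_le_prod (fun _ _ => norm_nonneg _) fun k _ => norm_qGaussRatio_le hq hs hw k

lemma qGaussRatio_denom_ne_zero (hq : ‖q‖ < 1) (hs : ‖s ^ 2‖ < 1) (n : ℕ) :
    (1 - s ^ 2 * q ^ n) * (1 - q * q ^ n) ≠ 0 :=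
  mul_ne_zero (one_sub_mul_pow_ne_zero hs hq.le n) (one_sub_mul_pow_ne_zero hq hq.le n)

lemma qGaussTerm_succ_telescope (hq : ‖q‖ < 1) (hs : ‖s ^ 2‖ < 1) (x y : ℂ) (N : ℕ) :
    (1 - x * y) * qGaussTerm q s x y (N + 1) - (1 + s * y) * qGaussTerm q s x (q * y) (N + 1)
      = y * (x + s * q ^ N) * qGaussTerm q s x y N
        - y * (x + s * q ^ (N + 1)) * qGaussTerm q s x y (N + 1) := by
  rw [qGaussTerm_mul_left_succ, qGaussTerm_succ, qGaussRatio]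
  linear_combination (y * (x + s * q ^ N) * qGaussTerm q s x y N) *
    div_self (qGaussRatio_denom_ne_zero hq hs N)

lemma sum_range_qGaussTerm_sub (hq : ‖q‖ < 1) (hs : ‖s ^ 2‖ < 1) (x y : ℂ) (N : ℕ) :
    (1 - x * y) * ∑ n ∈ range (N + 1), qGaussTerm q s x y n
      - (1 + s * y) * ∑ n ∈ range (N + 1), qGaussTerm q s x (q * y) n
      = -(y * (x + s * q ^ N) * qGaussTerm q s x y N) := by
  induction N with
  | zero => simp [qGaussTerm_zero]; ring
  | succ N ih =>
    rw [sum_range_succ _ (N + 1), sum_range_succ _ (N + 1)]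
    linear_combination ih + qGaussTerm_succ_telescope hq hs x y N

lemma qGaussSum_functional_eq (hq : ‖q‖ < 1) (hs : ‖s ^ 2‖ < 1) {x y : ℂ} (hxy : ‖x * y‖ < 1) :
    (1 - x * y) * qGaussSum q s x y = (1 + s * y) * qGaussSum q s x (q * y) := by
  have hxqy : ‖x * (q * y)‖ < 1 := by
    rw [mul_left_comm, norm_mul]
    exact (mul_le_of_le_one_left (norm_nonneg _) hq.le).trans_lt hxy
  have hpartial := ((summable_qGaussTerm hq s hxy).hasSum.tendsto_sum_nat.const_mul (1 - x * y)).sub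
    ((summable_qGaussTerm hq s hxqy).hasSum.tendsto_sum_nat.const_mul (1 + s * y))
  have hzero : Tendsto (fun N => -(y * (x + s * q ^ N) * qGaussTerm q s x y N)) atTop (𝓝 0) := by
    have hfactor : Tendsto (fun N : ℕ => y * (x + s * q ^ N)) atTop (𝓝 (y * (x + s * 0))) :=
      ((tendsto_pow_atTop_nhds_zero_of_norm_lt_one hq).const_mul s |>.const_add x).const_mul y
    simpa using (hfactor.mul (summable_qGaussTerm hq s hxy).tendsto_atTop_zero).neg
  rw [← sub_eq_zero]
  refine tendsto_nhds_unique ((tendsto_add_atTop_iff_nat 1).mpr hpartial) ?_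
  simpa only [sum_range_qGaussTerm_sub hq hs] using hzero

lemma qGaussSum_mul_prod_range (hq : ‖q‖ < 1) (hs : ‖s ^ 2‖ < 1) {x y : ℂ} (hxy : ‖x * y‖ < 1)
    (N : ℕ) :
    qGaussSum q s x y * ∏ k ∈ range N, (1 - x * y * q ^ k)
      = (∏ k ∈ range N, (1 - (-s * y) * q ^ k)) * qGaussSum q s x (q ^ N * y) := by
  induction N with
  | zero => simp
  | succ N ih =>
    have hxqy : ‖x * (q ^ N * y)‖ < 1 := by
      rw [mul_left_comm, norm_mul, norm_pow]
      exact (mul_le_of_le_one_left (norm_nonneg _) (pow_le_one₀ (norm_nonneg q) hq.le)).trans_lt hxy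
    have hfe := qGaussSum_functional_eq hq hs hxqy
    rw [show q * (q ^ N * y) = q ^ (N + 1) * y by ring] at hfe
    rw [prod_range_succ, prod_range_succ, ← mul_assoc, ih]
    linear_combination (∏ k ∈ range N, (1 - (-s * y) * q ^ k)) * hfe

lemma qGaussSum_mul_tprod (hq : ‖q‖ < 1) (hs : ‖s ^ 2‖ < 1) {x y : ℂ} (hxy : ‖x * y‖ < 1) :
    qGaussSum q s x y * ∏' k : ℕ, (1 - x * y * q ^ k)
      = (∏' k : ℕ, (1 - (-s * y) * q ^ k)) * qGaussSum q s x 0 := by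
  have hprod (a : ℂ) : Tendsto (fun N => ∏ k ∈ range N, (1 - a * q ^ k)) atTop
      (𝓝 (∏' k : ℕ, (1 - a * q ^ k))) :=
    (multipliable_one_sub_mul_pow a hq).hasProd.tendsto_prod_nat
  refine tendsto_nhds_unique ((hprod (x * y)).const_mul _) ?_
  simpa only [qGaussSum_mul_prod_range hq hs hxy] using
    (hprod (-s * y)).mul (tendsto_qGaussSum_pow_mul hq hs hxy)

lemma qGaussSum_zero_neg (q s : ℂ) : qGaussSum q s 0 (-s) = 1 := by
  rw [qGaussSum, tsum_eq_single 0 fun n hn => ?_, qGaussTerm_zero]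
  have hvanish : homQPoch q s (-s) n = 0 :=
    prod_eq_zero (mem_range.mpr (Nat.pos_of_ne_zero hn)) (by simp)
  rw [qGaussTerm, hvanish, mul_zero, zero_div]

lemma qGaussSum_comm (q s x y : ℂ) : qGaussSum q s x y = qGaussSum q s y x :=
  tsum_congr (qGaussTerm_comm q s x y)

lemma qGaussSum_zero_left (hq : ‖q‖ < 1) (hs : ‖s ^ 2‖ < 1) (y : ℂ) :
    qGaussSum q s 0 y = (∏' k : ℕ, (1 - (-s * y) * q ^ k)) * qGaussSum q s 0 0 := by
  simpa using qGaussSum_mul_tprod hq hs (x := 0) (y := y) (by simp)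

lemma tprod_mul_qGaussSum_zero_zero (hq : ‖q‖ < 1) (hs : ‖s ^ 2‖ < 1) :
    (∏' k : ℕ, (1 - s ^ 2 * q ^ k)) * qGaussSum q s 0 0 = 1 := by
  simpa [qGaussSum_zero_neg, pow_two] using (qGaussSum_zero_left hq hs (-s)).symm

/-- The q-Gauss summation identity. The numerator terms `x^i (-s/x;q)_i` are interpreted
polynomially as `∏_{k<i} (x + s q^k)`. -/
theorem stmt1 (q s x y : ℂ) (hq : ‖q‖ < 1) (hs : ‖s ^ 2‖ < 1) (hxy : ‖x * y‖ < 1) :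
    ∑' i : ℕ,
      (∏ k ∈ Finset.range i, (x + s * q ^ k)) * (∏ k ∈ Finset.range i, (y + s * q ^ k)) /
        (qPoch q (s ^ 2) i * qPoch q q i)
      = (∏' k : ℕ, (1 - (-s * x) * q ^ k)) * (∏' k : ℕ, (1 - (-s * y) * q ^ k)) /
        ((∏' k : ℕ, (1 - s ^ 2 * q ^ k)) * ∏' k : ℕ, (1 - x * y * q ^ k)) := by
  change qGaussSum q s x y = _
  set Ax := ∏' k : ℕ, (1 - (-s * x) * q ^ k)
  set Ay := ∏' k : ℕ, (1 - (-s * y) * q ^ k)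
  set C := ∏' k : ℕ, (1 - s ^ 2 * q ^ k)
  have hy := qGaussSum_mul_tprod hq hs hxy
  have hx : qGaussSum q s x 0 = Ax * qGaussSum q s 0 0 :=
    (qGaussSum_comm q s x 0).trans (qGaussSum_zero_left hq hs x)
  have h0 : C * qGaussSum q s 0 0 = 1 := tprod_mul_qGaussSum_zero_zero hq hs
  rw [eq_div_iff (mul_ne_zero (tprod_one_sub_mul_pow_ne_zero hs hq)
    (tprod_one_sub_mul_pow_ne_zero hxy hq))]
  linear_combination C * hy + C * Ay * hx + Ax * Ay * h0
end

section
/- Stability of spin q-Whittaker polynomials: with $\mathbb{F}_{\lambda/\mu}(x_1,\dots,x_m) = \sum_{\mu = \nu^{(0)} \prec \cdots \prec \nu^{(m)} = \lambda} \prod_{i=1}^m \mathbb{F}_{\nu^{(i)}/\nu^{(i-1)}}(x_i)$, one has $\mathbb{F}_{\lambda/\mu}(x_1,\dots,x_{m-1},-s) = \mathbb{F}_{\lambda/\mu}(x_1,\dots,x_{m-1})$ for all partitions $\lambda \supset \mu$. -/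
/-- `xPoch q s x k = x^k (-s/x;q)_k = ∏_{j<k} (x + s q^j)`, interpreted polynomially. -/
noncomputable def xPoch (q s x : ℂ) (k : ℕ) : ℂ := ∏ j ∈ Finset.range k, (x + s * q ^ j)

/-- `μ ≻ ν`: the partition `μ` interlaces `ν`, i.e. `μ_i ≥ ν_i ≥ μ_{i+1}` (0-indexed parts). -/
def Interlace (μ ν : ℕ → ℕ) : Prop := ∀ i, ν i ≤ μ i ∧ μ (i + 1) ≤ ν i

open Classical in
/-- The one-variable skew spin q-Whittaker polynomial `𝔽_{μ/ν}(x)`, with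
`x^{|μ|-|ν|} (-s/x;q)_{μ_i-ν_i}` interpreted polynomially via `xPoch`. -/
noncomputable def sqW1 (q s x : ℂ) (μ ν : ℕ → ℕ) : ℂ :=
  if Interlace μ ν then
    ∏ᶠ i, xPoch q s x (μ i - ν i) * qPoch q (-s * x) (ν i - μ (i + 1)) *
        qPoch q q (μ i - μ (i + 1)) /
      (qPoch q q (μ i - ν i) * qPoch q q (ν i - μ (i + 1)) * qPoch q (s ^ 2) (μ i - μ (i + 1)))
  else 0

open Classical in
/-- The skew spin q-Whittaker polynomial `𝔽_{λ/μ}(x_1,…,x_m)` as a sum over interlacing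
chains `μ = ν⁽⁰⁾ ≺ ν⁽¹⁾ ≺ ⋯ ≺ ν⁽ᵐ⁾ = λ`. -/
noncomputable def sqWFskew (q s : ℂ) (m : ℕ) (μ lam : ℕ → ℕ) (x : Fin m → ℂ) : ℂ :=
  ∑ᶠ c : Fin (m + 1) → ℕ → ℕ,
    if c 0 = μ ∧ c (Fin.last m) = lam then
      ∏ i : Fin m, sqW1 q s (x i) (c i.succ) (c i.castSucc)
    else 0

/-!
Specialising the last variable to `-s` kills every step of a chain except a trivial one:
for a partition `ν`, the factor `x^{ν_i-ρ_i} (-s/x;q)_{ν_i-ρ_i}` of `𝔽_{ν/ρ}(x)` contains `x + s`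
as soon as `ρ_i < ν_i`, while for `ρ = ν` the factors `(-s x;q)` and `(s²;q)` cancel at `x = -s`.
Hence `𝔽_{ν/ρ}(-s) = 𝟙_{ν=ρ}`, and the sum over chains of length `m + 1` collapses onto the
chains of length `m` extended by the step `λ ≻ λ`.
-/

lemma finsum_eq_finsum_snoc {α M : Type*} [AddCommMonoid M] {n : ℕ} (G : (Fin (n + 1) → α) → M)
    (a : α) (hG : ∀ c, G c ≠ 0 → c (Fin.last n) = a) :
    ∑ᶠ c, G c = ∑ᶠ d, G (Fin.snoc d a) := by
  rw [← finsum_mem_range (f := G) (Fin.snoc_left_injective (α := fun _ => α) a), ← finsum_mem_univ]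
  refine finsum_mem_inter_support_eq' G _ _ fun c hc =>
    ⟨fun _ => ⟨Fin.init c, ?_⟩, fun _ => trivial⟩
  rw [← hG c hc]
  exact Fin.snoc_init_self c

@[simp] lemma qPoch_zero (q a : ℂ) : qPoch q a 0 = 1 := by simp [qPoch]

@[simp] lemma xPoch_zero (q s x : ℂ) : xPoch q s x 0 = 1 := by simp [xPoch]

lemma xPoch_neg_self_eq_zero (q s : ℂ) {k : ℕ} (hk : 0 < k) : xPoch q s (-s) k = 0 :=
  Finset.prod_eq_zero (Finset.mem_range.2 hk) (by simp)

lemma Antitone.interlace_self {ν : ℕ → ℕ} (hν : Antitone ν) : Interlace ν ν :=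
  fun i => ⟨le_rfl, hν i.le_succ⟩

noncomputable def sqW1Factor (q s x : ℂ) (μ ν : ℕ → ℕ) (i : ℕ) : ℂ :=
  xPoch q s x (μ i - ν i) * qPoch q (-s * x) (ν i - μ (i + 1)) * qPoch q q (μ i - μ (i + 1)) /
    (qPoch q q (μ i - ν i) * qPoch q q (ν i - μ (i + 1)) * qPoch q (s ^ 2) (μ i - μ (i + 1)))

lemma sqW1_of_interlace {q s x : ℂ} {μ ν : ℕ → ℕ} (h : Interlace μ ν) :
    sqW1 q s x μ ν = ∏ᶠ i, sqW1Factor q s x μ ν i := by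
  rw [sqW1, if_pos h]
  rfl

lemma sqW1Factor_eq_one {q s x : ℂ} {μ ν : ℕ → ℕ} {i : ℕ} (h₁ : μ i = ν i) (h₂ : ν i = μ (i + 1)) :
    sqW1Factor q s x μ ν i = 1 := by
  simp [sqW1Factor, h₁, ← h₂]

lemma finite_mulSupport_sqW1Factor (q s x : ℂ) {μ ν : ℕ → ℕ} (h : Interlace μ ν)
    (hμ : Antitone μ) : (Function.mulSupport (sqW1Factor q s x μ ν)).Finite := by
  obtain ⟨N, hN⟩ := WellFoundedLT.antitone_chain_condition hμ
  refine (Set.finite_Iio N).subset fun i hi => Set.mem_Iio.2 (lt_of_not_ge fun hNi => ?_)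
  have hi₀ : μ i = μ N := (hN i hNi).symm
  have hi₁ : μ (i + 1) = μ N := (hN (i + 1) (hNi.trans i.le_succ)).symm
  have hνi : ν i = μ N := le_antisymm (hi₀ ▸ (h i).1) (hi₁ ▸ (h i).2)
  exact hi (sqW1Factor_eq_one (hi₀.trans hνi.symm) (hνi.trans hi₁.symm))

lemma sqW1_neg_self {q s : ℂ} (hq : ∀ k, qPoch q q k ≠ 0) (hs : ∀ k, qPoch q (s ^ 2) k ≠ 0)
    {ν : ℕ → ℕ} (hν : Antitone ν) : sqW1 q s (-s) ν ν = 1 := by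
  rw [sqW1_of_interlace hν.interlace_self]
  refine finprod_eq_one_of_forall_eq_one fun i => ?_
  rw [sqW1Factor, div_eq_one_iff_eq (mul_ne_zero (mul_ne_zero (hq _) (hq _)) (hs _)),
    neg_mul_neg, ← sq]
  simp only [Nat.sub_self, xPoch_zero, qPoch_zero]
  ring

lemma sqW1_neg_of_ne (q s : ℂ) {ν ρ : ℕ → ℕ} (hν : Antitone ν) (hne : ν ≠ ρ) :
    sqW1 q s (-s) ν ρ = 0 := by
  by_cases hI : Interlace ν ρ
  · obtain ⟨i, hi⟩ := Function.ne_iff.1 hne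
    rw [sqW1_of_interlace hI]
    refine finprod_eq_zero _ i ?_ (finite_mulSupport_sqW1Factor q s (-s) hI hν)
    rw [sqW1Factor, xPoch_neg_self_eq_zero q s (Nat.sub_pos_of_lt ((hI i).1.lt_of_ne' hi))]
    simp
  · rw [sqW1, if_neg hI]

open Classical in
lemma sqW1_neg {q s : ℂ} (hq : ∀ k, qPoch q q k ≠ 0) (hs : ∀ k, qPoch q (s ^ 2) k ≠ 0)
    {ν : ℕ → ℕ} (hν : Antitone ν) (ρ : ℕ → ℕ) :
    sqW1 q s (-s) ν ρ = if ν = ρ then 1 else 0 := by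
  split_ifs with h
  · exact h ▸ sqW1_neg_self hq hs hν
  · exact sqW1_neg_of_ne q s hν h

theorem stmt9_general (q s : ℂ) (m : ℕ) (μ lam : ℕ → ℕ)
    (hlam : Antitone lam)
    (hq : ∀ k, qPoch q q k ≠ 0) (hs : ∀ k, qPoch q (s ^ 2) k ≠ 0)
    (x : Fin m → ℂ) :
    sqWFskew q s (m + 1) μ lam (Fin.snoc x (-s)) = sqWFskew q s m μ lam x := by
  classical
  rw [sqWFskew, sqWFskew, finsum_eq_finsum_snoc _ lam fun c hc =>
    by_contra fun h => hc (if_neg (by tauto))]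
  refine finsum_congr fun d => ?_
  have hprod : ∏ i : Fin (m + 1), sqW1 q s ((Fin.snoc x (-s) : Fin (m + 1) → ℂ) i)
        ((Fin.snoc d lam : Fin (m + 2) → ℕ → ℕ) i.succ)
        ((Fin.snoc d lam : Fin (m + 2) → ℕ → ℕ) i.castSucc) =
      (∏ i : Fin m, sqW1 q s (x i) (d i.succ) (d i.castSucc)) *
        sqW1 q s (-s) lam (d (Fin.last m)) := by
    simp only [Fin.prod_univ_castSucc, Fin.succ_castSucc, Fin.snoc_castSucc, Fin.succ_last,
      Fin.snoc_last]
  have h0 : (Fin.snoc d lam : Fin (m + 2) → ℕ → ℕ) 0 = d 0 := Fin.snoc_castSucc (i := 0) ..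
  rw [hprod, h0, Fin.snoc_last, sqW1_neg hq hs hlam]
  by_cases h : lam = d (Fin.last m) <;> simp [h, eq_comm (a := d (Fin.last m))]

/-- Stability: `𝔽_{λ/μ}(x_1,…,x_{m-1},-s) = 𝔽_{λ/μ}(x_1,…,x_{m-1})`. -/
theorem stmt9 (q s : ℂ) (m : ℕ) (μ lam : ℕ → ℕ)
    (hμ : Antitone μ) (hlam : Antitone lam)
    (hμ0 : ∀ᶠ i in Filter.atTop, μ i = 0) (hlam0 : ∀ᶠ i in Filter.atTop, lam i = 0)
    (hsub : ∀ i, μ i ≤ lam i)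
    (hq : ∀ k, qPoch q q k ≠ 0) (hs : ∀ k, qPoch q (s ^ 2) k ≠ 0)
    (x : Fin m → ℂ) :
    sqWFskew q s (m + 1) μ lam (Fin.snoc x (-s)) = sqWFskew q s m μ lam x :=
  stmt9_general q s m μ lam hlam hq hs x
end

section
/- Interlacing support of the one-row fused transfer: for the weights $W_x(i,j;k,\ell) = \mathbf{1}_{i+j=k+\ell}\,\mathbf{1}_{i \geq \ell}\, x^\ell \frac{(-s/x;q)_\ell (-sx;q)_{i-\ell}(q;q)_k}{(q;q)_\ell (q;q)_{i-\ell}(s^2;q)_k}$, and partitions $\mu, \nu$ of lengths at most $M$ with conjugate part-multiplicities $m'_i = \mu_i - \mu_{i+1}$, $n'_i = \nu_i - \nu_{i+1}$, the single-row partition function $\sum_{j_1,\dots,j_{M}} \prod_{i=1}^{M} W_x(n'_i, j_{i}; m'_i, j_{i+1})$ (with $j_{M+1} = 0$ and weighted by $x^{j_1}\frac{(-s/x;q)_{j_1}}{(q;q)_{j_1}}$ at the left boundary) is nonzero only if $\mu$ and $\nu$ interlace, i.e. $\mu_i \geq \nu_i \geq \mu_{i+1}$ for all $i$; in that case the horizontal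 edge values are uniquely determined: $j_i = \mu_i - \nu_i$. -/
/-- The fused vertex weights `W_x(i,j;k,ℓ)`. -/
noncomputable def fusedW (q s x : ℂ) (i j k l : ℕ) : ℂ :=
  if i + j = k + l ∧ l ≤ i then
    xPoch q s x l * qPoch q (-s * x) (i - l) * qPoch q q k /
      (qPoch q q l * qPoch q q (i - l) * qPoch q (s ^ 2) k)
  else 0

/-- Interlacing support of the single-row fused transfer: if the summand corresponding
to edge values `e` is nonzero, then `μ` and `ν` interlace and the edges are uniquely
determined: `e_i = μ_i - ν_i`. -/
theorem stmt17 (q s x : ℂ) (M : ℕ) (μ ν : ℕ → ℕ)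
    (hμ : Antitone μ) (hν : Antitone ν)
    (hμ0 : ∀ i, M ≤ i → μ i = 0) (hν0 : ∀ i, M ≤ i → ν i = 0)
    (e : Fin (M + 1) → ℕ) (hlast : e (Fin.last M) = 0)
    (hne : xPoch q s x (e 0) / qPoch q q (e 0) *
        ∏ i : Fin M, fusedW q s x (ν i - ν ((i : ℕ) + 1)) (e i.castSucc)
          (μ i - μ ((i : ℕ) + 1)) (e i.succ) ≠ 0) :
    (∀ i, ν i ≤ μ i ∧ μ (i + 1) ≤ ν i) ∧ ∀ i : Fin (M + 1), e i = μ i - ν i := by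
  have hM : μ M = 0 := hμ0 M le_rfl
  have hN : ν M = 0 := hν0 M le_rfl
  have key : ∀ i : Fin M,
      (ν i - ν ((i : ℕ) + 1)) + e i.castSucc = (μ i - μ ((i : ℕ) + 1)) + e i.succ ∧
        e i.succ ≤ ν i - ν ((i : ℕ) + 1) := by
    intro i
    by_contra h
    apply hne
    rw [Finset.prod_eq_zero (Finset.mem_univ i) (by rw [fusedW, if_neg h]), mul_zero]
  -- integer equation for edges
  have hint : ∀ d i (_ : i + d = M), (e ⟨i, by omega⟩ : ℤ) = (μ i : ℤ) - (ν i : ℤ) := by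
    intro d
    induction d with
    | zero =>
      intro i hi
      have : i = M := by omega
      subst this
      have : e ⟨i, by omega⟩ = 0 := hlast
      rw [this, hM, hN]; simp
    | succ d ih =>
      intro i hi
      have hiM : i < M := by omega
      have h1 := key ⟨i, hiM⟩
      have h2 := ih (i + 1) (by omega)
      have hec : e (Fin.castSucc ⟨i, hiM⟩) = e ⟨i, by omega⟩ := rfl
      have hes : e (Fin.succ ⟨i, hiM⟩) = e ⟨i + 1, by omega⟩ := rfl
      have hνle : ν (i + 1) ≤ ν i := hν (by omega)
      have hμle : μ (i + 1) ≤ μ i := hμ (by omega)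
      rcases h1 with ⟨h1, _⟩
      rw [hec, hes] at h1
      simp only [Fin.val_mk] at h1 h2 ⊢
      omega
  have hle : ∀ i, ν i ≤ μ i := by
    intro i
    by_cases hiM : i ≤ M
    · have h := hint (M - i) i (by omega)
      have hnn : (0 : ℤ) ≤ (e ⟨i, by omega⟩ : ℤ) := Int.natCast_nonneg _
      omega
    · rw [hμ0 i (by omega), hν0 i (by omega)]
  refine ⟨fun i => ⟨hle i, ?_⟩, fun i => ?_⟩
  · by_cases hiM : i < M
    · have h1 := (key ⟨i, hiM⟩).2
      have h2 := hint (M - (i + 1)) (i + 1) (by omega)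
      have hes : e (Fin.succ ⟨i, hiM⟩) = e ⟨i + 1, by omega⟩ := rfl
      rw [hes] at h1
      have hνle : ν (i + 1) ≤ ν i := hν (by omega)
      simp only [Fin.val_mk] at h1 h2
      omega
    · rw [hμ0 (i + 1) (by omega)]; exact Nat.zero_le _
  · have h := hint (M - i) i (by omega)
    have : e ⟨(i : ℕ), by omega⟩ = e i := by congr 1
    rw [this] at h
    omega
end
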